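/- Define h(z) = (1+z)²·(1+z²)/(1 + z² + z⁴) and f₀(z) = (√(h(z)) − 1)/(√(h(z)) + 1) on D, where √ is the holomorphic branch of the square root with √1 = 1. Then f₀ ∈ 𝒯 with f₀'(0) = 1/2, but f₀ is not injective on D (its derivative vanishes at the point −1/4 + i√3/4 + (1/2)·√(−9/2 − i√3/2) of D); hence 𝒰 is a proper subset of 𝒯. -/

import Mathlib

open Complex Set Filter Topology

noncomputable section

/-- The open unit disc. -/
def uDisc : Set ℂ := {z : ℂ | ‖z‖ < 1}

/-- The holomorphic branch of the square root with `√1 = 1` (principal branch). -/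
def csqrt (z : ℂ) : ℂ := z ^ (1/2 : ℂ)

/-- `f` has only real Taylor coefficients at `0`, expressed by the symmetry
`f(conj z) = conj (f z)` on the unit disc. -/
def RealCoeffs (f : ℂ → ℂ) : Prop :=
  ∀ z ∈ uDisc, f ((starRingEnd ℂ) z) = (starRingEnd ℂ) (f z)

/-- The class `𝒰` of univalent self-maps of the unit disc with `f(0) = 0`,
`f'(0) > 0` and real Taylor coefficients. -/
def ClassU (f : ℂ → ℂ) : Prop :=
  DifferentiableOn ℂ f uDisc ∧ InjOn f uDisc ∧ MapsTo f uDisc uDisc ∧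
    f 0 = 0 ∧ 0 < (deriv f 0).re ∧ (deriv f 0).im = 0 ∧ RealCoeffs f

/-- The value range `V_𝒰(z0)`. -/
def VU (z0 : ℂ) : Set ℂ := {w : ℂ | ∃ f : ℂ → ℂ, ClassU f ∧ f z0 = w}

/-- The class `𝒯` of typically real holomorphic self-maps of the unit disc
with `f(0) = 0` and `f'(0) > 0`. -/
def ClassT (f : ℂ → ℂ) : Prop :=
  DifferentiableOn ℂ f uDisc ∧ MapsTo f uDisc uDisc ∧ f 0 = 0 ∧
    0 < (deriv f 0).re ∧ (deriv f 0).im = 0 ∧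
    ∀ z ∈ uDisc, 0 ≤ (f z).im * z.im

/-- The auxiliary function `h(z) = (1+z)²(1+z²)/(1+z²+z⁴)`. -/
def hAux (z : ℂ) : ℂ := (1+z)^2 * (1+z^2) / (1 + z^2 + z^4)

/-- The typically real, non-univalent function `f₀`. -/
def fZero (z : ℂ) : ℂ := (csqrt (hAux z) - 1) / (csqrt (hAux z) + 1)

/-- The critical point of `f₀` inside the unit disc. -/
def critPt : ℂ :=
  -(1/4) + Complex.I * (Real.sqrt 3 : ℂ) / 4 +
    (1/2) * csqrt (-(9/2) - Complex.I * (Real.sqrt 3 : ℂ) / 2)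

/-!
Writing `h = N / Q`, one checks `Im N · Re Q - Re N · Im Q = 2y(1 - |z|²) P(x, y)` with `P > 0`
on the disc, so `h` maps the upper half-disc into the upper half-plane; as `h` has real
coefficients and is positive on `(-1, 1)`, it maps the disc into the slit plane, preserving the
sign of `Im`. The principal square root and then `w ↦ (w - 1) / (w + 1)` send the slit plane
into the disc and also preserve that sign, so `f₀` is typically real. It is not univalent since
`h(i/2) = h(-1/4 + 3i/4)`. Conversely, a univalent map with real coefficients takes real values
only on the real axis, so by connectedness `Im f` has one sign on the upper half-disc, which is
positive because `f'(0) > 0`.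
-/

open ComplexConjugate

lemma mem_uDisc_iff_normSq {z : ℂ} : z ∈ uDisc ↔ normSq z < 1 := by
  rw [uDisc, mem_ofPred_eq, normSq_eq_norm_sq, sq_lt_one_iff₀ (norm_nonneg z)]

lemma uDisc_eq_ball : uDisc = Metric.ball 0 1 := by
  ext z
  simp [uDisc]

lemma isOpen_uDisc : IsOpen uDisc :=
  uDisc_eq_ball ▸ Metric.isOpen_ball

lemma zero_mem_uDisc : (0 : ℂ) ∈ uDisc := by
  simp [uDisc]

lemma conj_mem_uDisc {z : ℂ} (hz : z ∈ uDisc) : conj z ∈ uDisc := by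
  simpa [uDisc] using hz

lemma mul_im_nonneg_of_realCoeffs {f : ℂ → ℂ} (hreal : RealCoeffs f)
    (hupper : ∀ z ∈ uDisc, 0 < z.im → 0 < (f z).im) (z : ℂ) (hz : z ∈ uDisc) :
    0 ≤ (f z).im * z.im := by
  rcases lt_trichotomy z.im 0 with him | him | him
  · have := hupper (conj z) (conj_mem_uDisc hz) (by simpa using him)
    rw [hreal z hz, conj_im] at this
    nlinarith
  · simp [him]
  · exact (mul_pos (hupper z hz him) him).le

lemma im_ne_zero_of_injOn_of_realCoeffs {f : ℂ → ℂ} (hinj : InjOn f uDisc)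
    (hreal : RealCoeffs f) {z : ℂ} (hz : z ∈ uDisc) (him : z.im ≠ 0) : (f z).im ≠ 0 := by
  intro hfz
  have hconj : conj z = z :=
    hinj (conj_mem_uDisc hz) hz (by rw [hreal z hz, conj_eq_iff_im.mpr hfz])
  exact him (conj_eq_iff_im.mp hconj)

lemma exists_im_pos_on_imaginary_axis {f : ℂ → ℂ} (hf : DifferentiableAt ℂ f 0)
    (hf0 : f 0 = 0) (hre : 0 < (deriv f 0).re) :
    ∃ t : ℝ, 0 < t ∧ t < 1 ∧ 0 < (f (I * t)).im := by
  have hg : HasDerivAt (fun t : ℝ => (f (I * t)).im) (deriv f 0).re 0 := by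
    simpa using ((hf.hasDerivAt.comp_of_eq (0 : ℂ) ((hasDerivAt_id (0 : ℂ)).const_mul I)
      (by simp)).const_mul (-I)).real_of_complex
  have hsign := eventually_nhdsWithin_sign_eq_of_deriv_pos (hg.deriv ▸ hre) (by simp [hf0])
  obtain ⟨t, hsign, ht0, ht1⟩ :=
    ((eventually_nhdsWithin_of_eventually_nhds hsign).and (Ioo_mem_nhdsGT one_pos)).exists
  refine ⟨t, ht0, ht1, ?_⟩
  simpa [sign_pos ht0, sign_eq_one_iff] using hsign

lemma im_pos_of_classU {f : ℂ → ℂ} (hf : ClassU f) {z : ℂ} (hz : z ∈ uDisc)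
    (him : 0 < z.im) : 0 < (f z).im := by
  obtain ⟨hdiff, hinj, -, hf0, hre, -, hreal⟩ := hf
  obtain ⟨t, ht0, ht1, hft⟩ := exists_im_pos_on_imaginary_axis
    (hdiff.differentiableAt (isOpen_uDisc.mem_nhds zero_mem_uDisc)) hf0 hre
  have hS : IsPreconnected (uDisc ∩ {w : ℂ | 0 < w.im}) := by
    rw [uDisc_eq_ball]
    exact ((convex_ball 0 1).inter (convex_halfSpace_im_gt 0)).isPreconnected
  have ht : I * t ∈ uDisc ∩ {w : ℂ | 0 < w.im} :=
    ⟨by simpa [uDisc, abs_of_pos ht0], by simpa⟩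
  by_contra! hle
  obtain ⟨w, hwS, hw⟩ := hS.intermediate_value ⟨hz, him⟩ ht
    (continuous_im.comp_continuousOn (hdiff.continuousOn.mono inter_subset_left)) ⟨hle, hft.le⟩
  exact im_ne_zero_of_injOn_of_realCoeffs hinj hreal hwS.1 hwS.2.ne' hw

lemma classT_of_classU {f : ℂ → ℂ} (hf : ClassU f) : ClassT f := by
  have hupper : ∀ z ∈ uDisc, 0 < z.im → 0 < (f z).im := fun _ hz => im_pos_of_classU hf hz
  obtain ⟨hdiff, -, hmaps, hf0, hre, him, hreal⟩ := hf
  exact ⟨hdiff, hmaps, hf0, hre, him, mul_im_nonneg_of_realCoeffs hreal hupper⟩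

lemma csqrt_one : csqrt 1 = 1 := one_cpow _

lemma csqrt_sq (z : ℂ) : csqrt z ^ 2 = z := by
  rw [csqrt, one_div]
  exact cpow_ofNat_inv_pow z 2

lemma csqrt_eq_exp {z : ℂ} (hz : z ≠ 0) : csqrt z = exp (log z / 2) := by
  rw [csqrt, cpow_def_of_ne_zero hz]
  ring_nf

lemma re_csqrt_pos {z : ℂ} (hz : z ∈ slitPlane) : 0 < (csqrt z).re := by
  obtain ⟨harg, hz0⟩ := mem_slitPlane_iff_arg.mp hz
  rw [csqrt_eq_exp hz0, exp_re]
  have hcos : 0 < Real.cos (arg z / 2) := by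
    apply Real.cos_pos_of_mem_Ioo
    constructor <;> linarith [neg_pi_lt_arg z, (arg_le_pi z).lt_of_ne harg]
  simp only [div_ofNat_im, log_im]
  positivity

lemma im_csqrt_pos {z : ℂ} (hz : 0 < z.im) : 0 < (csqrt z).im := by
  have hz0 : z ≠ 0 := fun h => by simp [h] at hz
  have harg : 0 < arg z :=
    (arg_nonneg_iff.mpr hz.le).lt_of_ne fun h => hz.ne' (arg_eq_zero_iff.mp h.symm).2
  rw [csqrt_eq_exp hz0, exp_im]
  have hsin : 0 < Real.sin (arg z / 2) :=
    Real.sin_pos_of_pos_of_lt_pi (by linarith) (by linarith [arg_le_pi z, Real.pi_pos])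
  simp only [div_ofNat_im, log_im]
  positivity

lemma csqrt_conj {z : ℂ} (hz : z ∈ slitPlane) : csqrt (conj z) = conj (csqrt z) := by
  rw [csqrt, csqrt, conj_cpow z _ (mem_slitPlane_iff_arg.mp hz).1]
  simp [map_ofNat]

lemma sub_one_div_add_one_mem_uDisc {w : ℂ} (hw : 0 < w.re) : (w - 1) / (w + 1) ∈ uDisc := by
  have hw1 : w + 1 ≠ 0 := fun h => by
    have := congrArg re h
    simp at this
    linarith
  rw [mem_uDisc_iff_normSq, normSq_div, div_lt_one (normSq_pos.mpr hw1)]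
  simp only [normSq_apply, sub_re, sub_im, add_re, add_im, one_re, one_im]
  nlinarith

lemma im_sub_one_div_add_one_pos {w : ℂ} (hw : 0 < w.im) : 0 < ((w - 1) / (w + 1)).im := by
  have hw1 : w + 1 ≠ 0 := fun h => by
    have := congrArg im h
    simp at this
    linarith
  rw [div_im, ← sub_div]
  apply div_pos _ (normSq_pos.mpr hw1)
  simp only [sub_re, sub_im, add_re, add_im, one_re, one_im]
  linarith

lemma one_add_sq_add_pow_four_ne_zero {z : ℂ} (hz : z ∈ uDisc) : 1 + z ^ 2 + z ^ 4 ≠ 0 := by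
  intro h
  have h6 : z ^ 6 = 1 := by linear_combination (z ^ 2 - 1) * h
  have hz6 : ‖z‖ ^ 6 < 1 := pow_lt_one₀ (norm_nonneg z) hz (by norm_num)
  rw [← norm_pow, h6, norm_one] at hz6
  exact lt_irrefl _ hz6

lemma hAux_conj (z : ℂ) : hAux (conj z) = conj (hAux z) := by
  simp [hAux]

lemma hAux_zero : hAux 0 = 1 := by
  norm_num [hAux]

lemma im_hAux_pos {z : ℂ} (hz : z ∈ uDisc) (him : 0 < z.im) : 0 < (hAux z).im := by
  have hQ : 0 < normSq (1 + z ^ 2 + z ^ 4) := normSq_pos.mpr (one_add_sq_add_pow_four_ne_zero hz)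
  have hnorm := mem_uDisc_iff_normSq.mp hz
  rw [normSq_apply] at hnorm
  set x := z.re
  set y := z.im
  set P := 1 + x + 3 * x ^ 2 + x ^ 3 + x ^ 4 - y ^ 2 + x * y ^ 2 + 2 * x ^ 2 * y ^ 2 + y ^ 4
  have hP : 0 < P := by
    nlinarith [sq_nonneg (y ^ 2 + (x + 2 * x ^ 2 - 1) / 2), sq_nonneg (x + 1 / 5)]
  have hnum : ((1 + z) ^ 2 * (1 + z ^ 2)).im * (1 + z ^ 2 + z ^ 4).re -
      ((1 + z) ^ 2 * (1 + z ^ 2)).re * (1 + z ^ 2 + z ^ 4).im =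
        2 * y * (1 - x ^ 2 - y ^ 2) * P := by
    simp only [add_re, add_im, mul_re, mul_im, one_re, one_im, pow_succ, pow_zero, one_mul]
    ring
  rw [hAux, div_im, ← sub_div, hnum]
  have : 0 < 1 - x ^ 2 - y ^ 2 := by nlinarith
  positivity

lemma hAux_mem_slitPlane {z : ℂ} (hz : z ∈ uDisc) : hAux z ∈ slitPlane := by
  rcases lt_trichotomy z.im 0 with him | him | him
  · have := im_hAux_pos (conj_mem_uDisc hz) (by simpa using him)
    rw [hAux_conj, conj_im] at this
    exact mem_slitPlane_iff.mpr (Or.inr (by linarith))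
  · obtain ⟨x, rfl⟩ : ∃ x : ℝ, z = x := ⟨z.re, ext rfl (by simp [him])⟩
    have hx : -1 < x := by
      have := mem_uDisc_iff_normSq.mp hz
      rw [normSq_ofReal] at this
      nlinarith
    have hpos : 0 < (1 + x) ^ 2 * (1 + x ^ 2) / (1 + x ^ 2 + x ^ 4) := by
      have : 0 < 1 + x := by linarith
      positivity
    convert ofReal_mem_slitPlane.mpr hpos using 1
    simp [hAux]
  · exact mem_slitPlane_iff.mpr (Or.inr (im_hAux_pos hz him).ne')

lemma hasDerivAt_hAux {z : ℂ} (hz : z ∈ uDisc) :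
    HasDerivAt hAux
      (2 * (1 - z ^ 2) * (z ^ 4 + z ^ 3 + 3 * z ^ 2 + z + 1) / (1 + z ^ 2 + z ^ 4) ^ 2) z := by
  have hQ := one_add_sq_add_pow_four_ne_zero hz
  have hN : HasDerivAt (fun z : ℂ => (1 + z) ^ 2 * (1 + z ^ 2))
      (2 * (1 + z) * (1 + z ^ 2) + (1 + z) ^ 2 * (2 * z)) z :=
    ((((hasDerivAt_id z).const_add 1).pow 2).mul
      (((hasDerivAt_id z).pow 2).const_add 1)).congr_deriv (by simp)
  have hD : HasDerivAt (fun z : ℂ => 1 + z ^ 2 + z ^ 4) (2 * z + 4 * z ^ 3) z :=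
    ((((hasDerivAt_id z).pow 2).const_add 1).add ((hasDerivAt_id z).pow 4)).congr_deriv
      (by simp)
  exact (hN.div hD hQ).congr_deriv (by ring)

lemma hasDerivAt_fZero {z : ℂ} (hz : z ∈ uDisc) :
    HasDerivAt fZero (2 / (csqrt (hAux z) + 1) ^ 2 * (1 / 2 * hAux z ^ (1 / 2 - 1 : ℂ)) *
      (2 * (1 - z ^ 2) * (z ^ 4 + z ^ 3 + 3 * z ^ 2 + z + 1) / (1 + z ^ 2 + z ^ 4) ^ 2)) z := by
  have hw : HasDerivAt (fun z => csqrt (hAux z))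
      (1 / 2 * hAux z ^ (1 / 2 - 1 : ℂ) *
        (2 * (1 - z ^ 2) * (z ^ 4 + z ^ 3 + 3 * z ^ 2 + z + 1) / (1 + z ^ 2 + z ^ 4) ^ 2)) z :=
    (hasStrictDerivAt_cpow_const (hAux_mem_slitPlane hz)).hasDerivAt.comp z (hasDerivAt_hAux hz)
  have hw1 : csqrt (hAux z) + 1 ≠ 0 := fun h => by
    have := congrArg re h
    simp only [add_re, one_re, zero_re] at this
    linarith [re_csqrt_pos (hAux_mem_slitPlane hz)]
  exact ((hw.sub_const 1).div (hw.add_const 1) hw1).congr_deriv (by ring)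

lemma differentiableOn_fZero : DifferentiableOn ℂ fZero uDisc := fun _ hz =>
  (hasDerivAt_fZero hz).differentiableAt.differentiableWithinAt

lemma fZero_zero : fZero 0 = 0 := by
  norm_num [fZero, hAux_zero, csqrt_one]

lemma deriv_fZero_zero : deriv fZero 0 = 1 / 2 := by
  rw [(hasDerivAt_fZero zero_mem_uDisc).deriv, hAux_zero, csqrt_one]
  norm_num

lemma realCoeffs_fZero : RealCoeffs fZero := fun z hz => by
  simp only [fZero, hAux_conj, csqrt_conj (hAux_mem_slitPlane hz), map_div₀, map_sub, map_add,
    map_one]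

lemma classT_fZero : ClassT fZero := by
  refine ⟨differentiableOn_fZero, ?_, fZero_zero, by norm_num [deriv_fZero_zero],
    by norm_num [deriv_fZero_zero], mul_im_nonneg_of_realCoeffs realCoeffs_fZero ?_⟩
  · exact fun z hz => sub_one_div_add_one_mem_uDisc (re_csqrt_pos (hAux_mem_slitPlane hz))
  · exact fun z hz him => im_sub_one_div_add_one_pos (im_csqrt_pos (im_hAux_pos hz him))

/-- `critPt` is the root of `c² - ωc + 1`, `ω = e^{2πi/3}`, in the disc; since
`z⁴ + z³ + 3z² + z + 1 = (z² - ωz + 1)(z² - ω̄z + 1)`, it is a zero of `h'`. -/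
lemma critPt_quartic : critPt ^ 4 + critPt ^ 3 + 3 * critPt ^ 2 + critPt + 1 = 0 := by
  set s : ℂ := (Real.sqrt 3 : ℂ)
  have hs : s ^ 2 = 3 := by
    rw [← ofReal_pow, Real.sq_sqrt (by norm_num : (0 : ℝ) ≤ 3)]
    norm_num
  have he := csqrt_sq (-(9 / 2) - I * s / 2)
  have hquad : critPt ^ 2 - (-(1 / 2) + I * s / 2) * critPt + 1 = 0 := by
    rw [critPt]
    linear_combination (1 / 4) * he - s ^ 2 / 16 * I_sq + (1 / 16) * hs
  linear_combination (critPt ^ 2 + (1 / 2 + I * s / 2) * critPt + 1) * hquad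
    + s ^ 2 * critPt ^ 2 / 4 * I_sq - critPt ^ 2 / 4 * hs

lemma critPt_mem_uDisc : critPt ∈ uDisc := by
  set s : ℝ := Real.sqrt 3
  have hs : s ^ 2 = 3 := Real.sq_sqrt (by norm_num)
  have hs0 : 0 ≤ s := Real.sqrt_nonneg 3
  set e := csqrt (-(9 / 2) - I * s / 2)
  have he : e ^ 2 = -(9 / 2) - I * s / 2 := csqrt_sq _
  have hre : e.re ^ 2 - e.im ^ 2 = -(9 / 2) := by
    simpa [sq] using congrArg re he
  have him : 2 * e.re * e.im = -(s / 2) := by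
    have := congrArg im he
    simp [sq] at this
    linarith
  have ha : 0 < e.re := re_csqrt_pos (mem_slitPlane_iff.mpr (Or.inr (by simp; positivity)))
  rw [mem_uDisc_iff_normSq, normSq_apply]
  simp only [critPt, add_re, add_im, mul_re, mul_im, neg_re, neg_im, div_ofNat_re, div_ofNat_im,
    I_re, I_im, ofReal_re, ofReal_im]
  norm_num
  nlinarith

lemma deriv_fZero_critPt : deriv fZero critPt = 0 := by
  rw [(hasDerivAt_fZero critPt_mem_uDisc).deriv, critPt_quartic]
  simp

lemma hAux_I_div_two : hAux (I / 2) = (9 + 12 * I) / 13 := by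
  apply Complex.ext <;> norm_num [hAux, pow_succ, div_re, div_im, normSq_apply]

lemma hAux_neg_quarter_add_three_quarters_I :
    hAux (-(1 / 4) + 3 / 4 * I) = (9 + 12 * I) / 13 := by
  apply Complex.ext <;> norm_num [hAux, pow_succ, div_re, div_im, normSq_apply]

lemma not_injOn_fZero : ¬ InjOn fZero uDisc := by
  intro hinj
  have h₁ : I / 2 ∈ uDisc := by
    norm_num [mem_uDisc_iff_normSq, normSq_apply]
  have h₂ : -(1 / 4) + 3 / 4 * I ∈ uDisc := by
    norm_num [mem_uDisc_iff_normSq, normSq_apply]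
  have heq : fZero (I / 2) = fZero (-(1 / 4) + 3 / 4 * I) := by
    rw [fZero, fZero, hAux_I_div_two, hAux_neg_quarter_add_three_quarters_I]
  have := congrArg re (hinj h₁ h₂ heq)
  norm_num at this

theorem ClassU_ssubset_ClassT :
    ClassT fZero ∧ deriv fZero 0 = 1/2 ∧ ¬ InjOn fZero uDisc ∧
    critPt ∈ uDisc ∧ deriv fZero critPt = 0 ∧
    {f : ℂ → ℂ | ClassU f} ⊂ {f : ℂ → ℂ | ClassT f} :=
  ⟨classT_fZero, deriv_fZero_zero, not_injOn_fZero, critPt_mem_uDisc, deriv_fZero_critPt,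
    fun _ => classT_of_classU, fun h => not_injOn_fZero (h classT_fZero).2.1⟩
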